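/- Let μ be an atomless Borel probability measure on X that is invariant and ergodic under the Z^2-action generated by T and S. Then μ(Z_2) = 0. -/

import Mathlib

open MeasureTheory Filter

/-- Configurations: `ℤ²`-indexed families of elements of `ℤ/2ℤ`. -/
abbrev Config := ℤ → ℤ → ZMod 2

/-- The three-dot relation. -/
def threeDot (x : Config) : Prop :=
  ∀ k l : ℤ, x k l + x (k + 1) l + x k (l + 1) = 0

/-- The three-dot system `X`. -/
def Xset : Set Config := {x | threeDot x}

/-- The `ℤ²`-shift action: `shift k l x = T^k S^l x`. -/
def shift (k l : ℤ) (x : Config) : Config := fun a b => x (a + k) (b + l)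

/-- The shift `T`. -/
def Tm : Config → Config := shift 1 0

/-- The shift `S`. -/
def Sm : Config → Config := shift 0 1

/-- `Y` : points of `X` with coordinate `1` at the origin. -/
def Yset : Set Config := {x | threeDot x ∧ x 0 0 = 1}

/-- The map `σ : Y → Y`, extended to all configurations:
it equals `Tx` if `Tx` has a `1` at the origin, and `Sx` otherwise. -/
def sig (x : Config) : Config := if x 1 0 = 1 then Tm x else Sm x

/-- `Z` : points of `Y` with σ-antecedents of every depth (equivalently,
infinitely many σ-antecedents). -/
def Zset : Set Config := {x | x ∈ Yset ∧ ∀ n : ℕ, ∃ y ∈ Yset, sig^[n] y = x}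

/-- `Z₂` : points of `Z` having two distinct σ-preimages in `Z`. -/
def Z2set : Set Config :=
  {x | x ∈ Zset ∧ ∃ y z, y ≠ z ∧ y ∈ Zset ∧ z ∈ Zset ∧ sig y = x ∧ sig z = x}

/-- The σ-component of a point `x` of `Y`: points of the `ℤ²`-orbit of `x`
lying in `Y` whose forward σ-trajectory meets that of `x`. -/
def sigComp (x : Config) : Set Config :=
  {y | (∃ k l : ℤ, y = shift k l x) ∧ y ∈ Yset ∧ ∃ p q : ℕ, sig^[p] x = sig^[q] y}

/-- Aperiodicity of a configuration for the `ℤ²`-action. -/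
def Aperiodic (x : Config) : Prop := ∀ k l : ℤ, shift k l x = x → k = 0 ∧ l = 0

/-!
On `C = {x | x 1 0 = 1}` the map `σ` is `T` and off `C` it is `S`, both measure-preserving
bijections. Every point has at most two `σ`-preimages, so a König argument gives `σ(Z) = Z`.
Hence `Z` is the union of `T(Z ∩ C)` and `S(Z \ C)`, whose measures add up to `μ Z`, and their
intersection is null. Each branch being injective, a point of `Z₂` has one `σ`-preimage in
each branch, so it lies in that intersection.
-/

namespace Set

variable {α β : Type*}

theorem image_piecewise (C : Set α) [DecidablePred (· ∈ C)] (f g : α → β) (s : Set α) :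
    C.piecewise f g '' s = f '' (s ∩ C) ∪ g '' (s \ C) := by
  ext x
  constructor
  · rintro ⟨y, hy, rfl⟩
    by_cases hyC : y ∈ C
    · exact Or.inl ⟨y, ⟨hy, hyC⟩, (piecewise_eq_of_mem _ _ _ hyC).symm⟩
    · exact Or.inr ⟨y, ⟨hy, hyC⟩, (piecewise_eq_of_notMem _ _ _ hyC).symm⟩
  · rintro (⟨y, ⟨hy, hyC⟩, rfl⟩ | ⟨y, ⟨hy, hyC⟩, rfl⟩)
    · exact ⟨y, hy, piecewise_eq_of_mem _ _ _ hyC⟩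
    · exact ⟨y, hy, piecewise_eq_of_notMem _ _ _ hyC⟩

theorem MapsTo.iInter_iterate_image {f : α → α} {s : Set α} (hf : MapsTo f s s) :
    MapsTo f (⋂ n, f^[n] '' s) (⋂ n, f^[n] '' s) := by
  intro x hx
  rw [mem_iInter] at hx ⊢
  rintro (_ | n)
  · simpa using hf (by simpa using hx 0)
  · obtain ⟨y, hy, rfl⟩ := hx n
    exact ⟨y, hy, Function.iterate_succ_apply' f n y⟩

theorem Finite.nonempty_iInter_of_antitone {s : ℕ → Set α} {t : Set α} (ht : t.Finite)
    (hst : ∀ n, s n ⊆ t) (hs : Antitone s) (hne : ∀ n, (s n).Nonempty) :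
    (⋂ n, s n).Nonempty := by
  by_contra h
  rw [not_nonempty_iff_eq_empty, iInter_eq_empty_iff] at h
  choose N hN using h
  obtain ⟨M, hM⟩ := (ht.image N).bddAbove
  obtain ⟨y, hy⟩ := hne M
  exact hN y (hs (hM (mem_image_of_mem N (hst M hy))) hy)

theorem SurjOn.iInter_iterate_image {f : α → α} {s : Set α} (hf : MapsTo f s s)
    (hfin : ∀ x, (f ⁻¹' {x}).Finite) : SurjOn f (⋂ n, f^[n] '' s) (⋂ n, f^[n] '' s) := by
  intro x hx
  rw [mem_iInter] at hx
  have hanti : Antitone fun n => f^[n] '' s := antitone_nat_of_succ_le fun n => by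
    rw [Function.iterate_succ, image_comp]
    exact image_mono hf.image_subset
  obtain ⟨y, hy⟩ := (hfin x).nonempty_iInter_of_antitone
    (s := fun n => f^[n] '' s ∩ f ⁻¹' {x}) (fun n => inter_subset_right)
    (fun m n hmn => inter_subset_inter_left _ (hanti hmn))
    (fun n => by
      obtain ⟨z, hz, rfl⟩ := hx (n + 1)
      exact ⟨f^[n] z, ⟨z, hz, rfl⟩, (Function.iterate_succ_apply' f n z).symm⟩)
  rw [mem_iInter] at hy
  exact ⟨y, mem_iInter.2 fun n => (hy n).1, (hy 0).2⟩

theorem finite_preimage_singleton_piecewise (C : Set α) [DecidablePred (· ∈ C)] {f g : α → β}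
    (hf : f.Injective) (hg : g.Injective) (x : β) : (C.piecewise f g ⁻¹' {x}).Finite := by
  rw [piecewise_preimage]
  exact (((finite_singleton x).preimage hf.injOn).union
    ((finite_singleton x).preimage hg.injOn)).subset (ite_subset_union _ _ _)

end Set

open MeasureTheory Set

theorem MeasureTheory.MeasurePreserving.measure_image_equiv {α β : Type*} [MeasurableSpace α]
    [MeasurableSpace β] {μa : Measure α} {μb : Measure β} {e : α ≃ᵐ β}
    (he : MeasurePreserving e μa μb) (s : Set α) : μb (e '' s) = μa s := by
  rw [e.image_eq_preimage_symm, (he.symm e).measure_preimage_equiv]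

section PiecewiseEquiv

variable {α : Type*} [MeasurableSpace α] {e₁ e₂ : α ≃ᵐ α} {C : Set α} [DecidablePred (· ∈ C)]

theorem measurableSet_iterate_image_piecewise (hC : MeasurableSet C) {s : Set α}
    (hs : MeasurableSet s) (n : ℕ) : MeasurableSet ((C.piecewise e₁ e₂)^[n] '' s) := by
  induction n with
  | zero => simpa using hs
  | succ n ih =>
    rw [Function.iterate_succ', image_comp, image_piecewise]
    exact (e₁.measurableSet_image.2 (ih.inter hC)).union
      (e₂.measurableSet_image.2 (ih.diff hC))

theorem measure_setOf_two_preimages_piecewise_eq_zero {μ : Measure α} [IsFiniteMeasure μ]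
    (h₁ : MeasurePreserving e₁ μ μ) (h₂ : MeasurePreserving e₂ μ μ) (hC : MeasurableSet C)
    {Z : Set α} (hZ : MeasurableSet Z) (hσZ : C.piecewise e₁ e₂ '' Z = Z) :
    μ {x | ∃ y ∈ Z, ∃ w ∈ Z, y ≠ w ∧ C.piecewise e₁ e₂ y = x ∧ C.piecewise e₁ e₂ w = x} = 0 := by
  set A := e₁ '' (Z ∩ C)
  set B := e₂ '' (Z \ C)
  have hB : MeasurableSet B := e₂.measurableSet_image.2 (hZ.diff hC)
  have hAB : A ∪ B = Z := image_piecewise C e₁ e₂ Z ▸ hσZ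
  have hsum : μ A + μ B = μ Z := by
    rw [h₁.measure_image_equiv, h₂.measure_image_equiv, measure_inter_add_sdiff _ hC]
  have hABnull : μ (A ∩ B) = 0 := by
    refine nonpos_iff_eq_zero.1 (ENNReal.le_of_add_le_add_left (measure_ne_top μ (A ∪ B)) ?_)
    rw [measure_union_add_inter _ hB, hsum, hAB, add_zero]
  refine measure_mono_null ?_ hABnull
  rintro x ⟨y, hy, w, hw, hne, rfl, hwy⟩
  by_cases hyC : y ∈ C <;> by_cases hwC : w ∈ C <;>
    simp only [piecewise_eq_of_mem, piecewise_eq_of_notMem, hyC, hwC, not_false_eq_true]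
      at hwy ⊢
  · exact absurd (e₁.injective hwy).symm hne
  · exact ⟨⟨y, ⟨hy, hyC⟩, rfl⟩, ⟨w, ⟨hw, hwC⟩, hwy⟩⟩
  · exact ⟨⟨w, ⟨hw, hwC⟩, hwy⟩, ⟨y, ⟨hy, hyC⟩, rfl⟩⟩
  · exact absurd (e₂.injective hwy).symm hne

end PiecewiseEquiv

theorem shift_shift (k l k' l' : ℤ) (x : Config) :
    shift k l (shift k' l' x) = shift (k + k') (l + l') x := by
  funext a b
  simp [shift, add_assoc]

theorem shift_zero_zero (x : Config) : shift 0 0 x = x := by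
  funext a b
  simp [shift]

theorem measurable_shift (k l : ℤ) : Measurable (shift k l) := by
  unfold shift
  fun_prop

def shiftEquiv (k l : ℤ) : Config ≃ᵐ Config where
  toFun := shift k l
  invFun := shift (-k) (-l)
  left_inv x := by simp [shift_shift, shift_zero_zero]
  right_inv x := by simp [shift_shift, shift_zero_zero]
  measurable_toFun := measurable_shift k l
  measurable_invFun := measurable_shift (-k) (-l)

theorem sig_eq_piecewise :
    sig = {x : Config | x 1 0 = 1}.piecewise (shiftEquiv 1 0) (shiftEquiv 0 1) := rfl

theorem threeDot_shift {x : Config} (hx : threeDot x) (k l : ℤ) : threeDot (shift k l x) := by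
  intro a b
  simpa [shift, add_right_comm] using hx (a + k) (b + l)

theorem mapsTo_sig_Yset : MapsTo sig Yset Yset := by
  rintro x ⟨hx, hx00⟩
  by_cases hx10 : x 1 0 = 1
  · simpa [Yset, sig, hx10, Tm, shift] using threeDot_shift hx 1 0
  · -- the three-dot relation at the origin reads `1 + x 1 0 + x 0 1 = 0` in `ZMod 2`
    have hx01 : x 0 1 = 1 := by
      have key : ∀ a b : ZMod 2, 1 + a + b = 0 → a ≠ 1 → b = 1 := by decide
      exact key _ _ (by simpa [hx00] using hx 0 0) hx10
    simpa [Yset, sig, hx10, Sm, shift, hx01] using threeDot_shift hx 0 1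

theorem measurable_coord (k l : ℤ) : Measurable fun x : Config => x k l := by
  fun_prop

theorem measurableSet_coord_eq (k l : ℤ) (c : ZMod 2) : MeasurableSet {x : Config | x k l = c} :=
  measurable_coord k l (measurableSet_singleton c)

theorem measurableSet_Yset : MeasurableSet Yset := by
  simp only [Yset, threeDot, ofPred_and, ofPred_forall]
  refine .inter (.iInter fun k => .iInter fun l => ?_) (measurableSet_coord_eq 0 0 1)
  have : Measurable fun x : Config => x k l + x (k + 1) l + x k (l + 1) := by fun_prop
  exact this (measurableSet_singleton 0)

theorem Zset_eq_iInter : Zset = ⋂ n, sig^[n] '' Yset := by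
  ext x
  simp only [Zset, mem_ofPred_eq, mem_iInter, mem_image]
  refine ⟨And.right, fun h => ⟨?_, h⟩⟩
  obtain ⟨y, hy, rfl⟩ := h 0
  exact hy

theorem measurableSet_Zset : MeasurableSet Zset := by
  rw [Zset_eq_iInter, sig_eq_piecewise]
  exact .iInter
    (measurableSet_iterate_image_piecewise (measurableSet_coord_eq 1 0 1) measurableSet_Yset)

theorem sig_image_Zset : sig '' Zset = Zset := by
  rw [Zset_eq_iInter]
  refine (SurjOn.iInter_iterate_image mapsTo_sig_Yset fun x => ?_).image_eq_of_mapsTo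
    mapsTo_sig_Yset.iInter_iterate_image
  rw [sig_eq_piecewise]
  exact finite_preimage_singleton_piecewise _ (shiftEquiv 1 0).injective
    (shiftEquiv 0 1).injective x

theorem stmt5_general (μ : Measure Config) [IsProbabilityMeasure μ]
    (hT : MeasurePreserving Tm μ μ) (hS : MeasurePreserving Sm μ μ) :
    μ Z2set = 0 := by
  refine measure_mono_null ?_ (measure_setOf_two_preimages_piecewise_eq_zero
    (e₁ := shiftEquiv 1 0) (e₂ := shiftEquiv 0 1) hT hS
    (measurableSet_coord_eq 1 0 1) measurableSet_Zset sig_image_Zset)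
  rintro x ⟨-, y, w, hne, hy, hw, hyx, hwx⟩
  exact ⟨y, hy, w, hw, hne, hyx, hwx⟩

/-- An atomless `ℤ²`-invariant ergodic probability measure on `X` gives
measure zero to `Z₂`. -/
theorem stmt5 (μ : Measure Config) [IsProbabilityMeasure μ]
    (hX : μ Xset = 1)
    (hT : MeasurePreserving Tm μ μ) (hS : MeasurePreserving Sm μ μ)
    (hatomless : ∀ c : Config, μ {c} = 0)
    (herg : ∀ A : Set Config, MeasurableSet A → Tm ⁻¹' A = A → Sm ⁻¹' A = A →
      μ A = 0 ∨ μ A = 1) :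
    μ Z2set = 0 :=
  stmt5_general μ hT hS
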